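/- Let S₁, S₂, S₃, S₄ be axis-aligned squares in ℝ × ℝ whose interiors are pairwise disjoint, such that Sᵢ ∩ S_{i+1} is an infinite set for each i (indices modulo 4), while S₁ ∩ S₃ = ∅ and S₂ ∩ S₄ = ∅. Then every bounded connected component of (ℝ × ℝ) \ (S₁ ∪ S₂ ∪ S₃ ∪ S₄) is the interior of an axis-aligned rectangle. -/

import Mathlib

open Set

structure AxSquare where
  x : ℝ
  y : ℝ
  side : ℝ
  side_pos : 0 < side

namespace AxSquare
def left (S : AxSquare) : ℝ := S.x
def right (S : AxSquare) : ℝ := S.x + S.side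
def bottom (S : AxSquare) : ℝ := S.y
def top (S : AxSquare) : ℝ := S.y + S.side
/-- The square as a subset of the plane. -/
def toSet (S : AxSquare) : Set (ℝ × ℝ) :=
  Set.Icc S.x (S.x + S.side) ×ˢ Set.Icc S.y (S.y + S.side)
end AxSquare

/-- A proper square-contact representation of `G`, restricted to the vertex set `A`. -/
def IsSCROn {V : Type} (G : SimpleGraph V) (A : Set V) (Sq : V → AxSquare) : Prop :=
  (∀ u ∈ A, ∀ v ∈ A, u ≠ v → interior (Sq u).toSet ∩ interior (Sq v).toSet = ∅) ∧
  (∀ u ∈ A, ∀ v ∈ A, G.Adj u v → ((Sq u).toSet ∩ (Sq v).toSet).Infinite) ∧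
  (∀ u ∈ A, ∀ v ∈ A, u ≠ v → ¬ G.Adj u v → (Sq u).toSet ∩ (Sq v).toSet = ∅)

/-- `G` admits a proper square-contact representation. -/
def HasSCR {V : Type} (G : SimpleGraph V) : Prop :=
  ∃ Sq : V → AxSquare, IsSCROn G Set.univ Sq

/-! A bounded component of the complement contains none of the four axis-parallel rays from one
of its points `p`, so some square lies directly above, below, left and right of `p`. These four
squares are distinct, hence they are all the squares; the upper and lower ones are disjoint, hence
opposite in the cycle of contacts, so each of them touches both the left and the right one. Those
contacts put the four edges of the open rectangle enclosed by the squares into their union, while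
the rectangle itself avoids it; and an open preconnected subset of `U` whose frontier misses `U`
is a connected component of `U`. -/

open Bornology

theorem connectedComponentIn_eq_of_isOpen_of_disjoint_frontier {X : Type*} [TopologicalSpace X]
    {U R : Set X} {p : X} (hRo : IsOpen R) (hRc : IsPreconnected R) (hRU : R ⊆ U)
    (hfr : Disjoint (frontier R) U) (hp : p ∈ R) : connectedComponentIn U p = R := by
  refine subset_antisymm ?_ (hRc.subset_connectedComponentIn hp hRU)
  refine isPreconnected_connectedComponentIn.subset_of_closure_inter_subset hRo
    ⟨p, mem_connectedComponentIn (hRU hp), hp⟩ fun q ⟨hqR, hqC⟩ => ?_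
  by_contra hq
  exact disjoint_left.1 hfr ⟨hqR, by rwa [hRo.interior_eq]⟩ (connectedComponentIn_subset _ _ hqC)

theorem exists_notMem_of_isBounded_connectedComponentIn {X : Type*} [TopologicalSpace X]
    [Bornology X] {U r : Set X} {p : X} (hbd : IsBounded (connectedComponentIn U p))
    (hr : IsPreconnected r) (hpr : p ∈ r) (hunb : ¬IsBounded r) : ∃ q ∈ r, q ∉ U := by
  by_contra! h
  exact hunb (hbd.subset (hr.subset_connectedComponentIn hpr h))

theorem iUnion_eq_union_four {α : Type*} (T : Fin 4 → Set α) {u d l r : Fin 4} (hud : u ≠ d)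
    (hul : u ≠ l) (hur : u ≠ r) (hdl : d ≠ l) (hdr : d ≠ r) (hlr : l ≠ r) :
    ⋃ i, T i = T u ∪ T d ∪ T l ∪ T r := by
  have hcover : ∀ i, i = u ∨ i = d ∨ i = l ∨ i = r := by
    revert u d l r; decide
  ext q
  simp only [mem_iUnion, mem_union]
  constructor
  · rintro ⟨i, hi⟩
    rcases hcover i with rfl | rfl | rfl | rfl <;> simp [hi]
  · rintro (((h | h) | h) | h) <;> exact ⟨_, h⟩

theorem inter_nonempty_of_cycle_four {α : Type*} {T : Fin 4 → Set α}
    (hT : ∀ i, (T i ∩ T (i + 1)).Nonempty) {u d l : Fin 4} (hud : ¬(T u ∩ T d).Nonempty)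
    (hlu : l ≠ u) (hld : l ≠ d) : (T u ∩ T l).Nonempty := by
  have hdu : u ≠ d := by
    rintro rfl
    exact hud (by simpa using (hT u).mono inter_subset_left)
  have hsucc : d ≠ u + 1 := by rintro rfl; exact hud (hT u)
  have hpred : u ≠ d + 1 := by rintro rfl; exact hud (inter_comm (T d) _ ▸ hT d)
  have hcycle : ∀ u d l : Fin 4, u ≠ d → d ≠ u + 1 → u ≠ d + 1 → l ≠ u → l ≠ d →
      l = u + 1 ∨ u = l + 1 := by
    decide
  rcases hcycle u d l hdu hsucc hpred hlu hld with rfl | rfl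
  · exact hT u
  · exact inter_comm (T l) _ ▸ hT l

namespace AxSquare

theorem left_lt_right (S : AxSquare) : S.left < S.right := lt_add_of_pos_right _ S.side_pos

theorem bottom_lt_top (S : AxSquare) : S.bottom < S.top := lt_add_of_pos_right _ S.side_pos

theorem left_le_right_of_inter_nonempty {S T : AxSquare} (h : (S.toSet ∩ T.toSet).Nonempty) :
    S.left ≤ T.right :=
  let ⟨_, hS, hT⟩ := h; hS.1.1.trans hT.1.2

theorem bottom_le_top_of_inter_nonempty {S T : AxSquare} (h : (S.toSet ∩ T.toSet).Nonempty) :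
    S.bottom ≤ T.top :=
  let ⟨_, hS, hT⟩ := h; hS.2.1.trans hT.2.2

def LiesAbove (S : AxSquare) (p : ℝ × ℝ) : Prop := p.1 ∈ Icc S.left S.right ∧ p.2 < S.bottom

def LiesBelow (S : AxSquare) (p : ℝ × ℝ) : Prop := p.1 ∈ Icc S.left S.right ∧ S.top < p.2

def LiesLeftOf (S : AxSquare) (p : ℝ × ℝ) : Prop := p.2 ∈ Icc S.bottom S.top ∧ S.right < p.1

def LiesRightOf (S : AxSquare) (p : ℝ × ℝ) : Prop := p.2 ∈ Icc S.bottom S.top ∧ p.1 < S.left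

section Blocking

variable {ι : Type*} {S : ι → AxSquare} {p : ℝ × ℝ}

theorem exists_mem_toSet_of_isBounded_connectedComponentIn
    (hbd : IsBounded (connectedComponentIn (⋃ i, (S i).toSet)ᶜ p)) {r : Set (ℝ × ℝ)}
    (hr : IsPreconnected r) (hpr : p ∈ r) (hunb : ¬IsBounded r) :
    ∃ q ∈ r, ∃ i, q ∈ (S i).toSet := by
  obtain ⟨q, hqr, hq⟩ := exists_notMem_of_isBounded_connectedComponentIn hbd hr hpr hunb
  exact ⟨q, hqr, mem_iUnion.1 (not_not.1 hq)⟩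

theorem exists_liesAbove (hp : p ∉ ⋃ i, (S i).toSet)
    (hbd : IsBounded (connectedComponentIn (⋃ i, (S i).toSet)ᶜ p)) : ∃ i, (S i).LiesAbove p := by
  obtain ⟨q, ⟨hq1, hq2⟩, i, hi⟩ := exists_mem_toSet_of_isBounded_connectedComponentIn hbd
    (isPreconnected_singleton.prod isPreconnected_Ici) ⟨rfl, self_mem_Ici⟩
    fun h => not_bddAbove_Ici p.2 (h.snd_of_prod (singleton_nonempty _)).bddAbove
  rw [mem_singleton_iff] at hq1
  exact ⟨i, hq1 ▸ hi.1, not_le.1 fun h => hp (mem_iUnion.2 ⟨i, hq1 ▸ hi.1, h, hq2.trans hi.2.2⟩)⟩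

theorem exists_liesBelow (hp : p ∉ ⋃ i, (S i).toSet)
    (hbd : IsBounded (connectedComponentIn (⋃ i, (S i).toSet)ᶜ p)) : ∃ i, (S i).LiesBelow p := by
  obtain ⟨q, ⟨hq1, hq2⟩, i, hi⟩ := exists_mem_toSet_of_isBounded_connectedComponentIn hbd
    (isPreconnected_singleton.prod isPreconnected_Iic) ⟨rfl, self_mem_Iic⟩
    fun h => not_bddBelow_Iic p.2 (h.snd_of_prod (singleton_nonempty _)).bddBelow
  rw [mem_singleton_iff] at hq1
  exact ⟨i, hq1 ▸ hi.1, not_le.1 fun h => hp (mem_iUnion.2 ⟨i, hq1 ▸ hi.1, hi.2.1.trans hq2, h⟩)⟩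

theorem exists_liesLeftOf (hp : p ∉ ⋃ i, (S i).toSet)
    (hbd : IsBounded (connectedComponentIn (⋃ i, (S i).toSet)ᶜ p)) : ∃ i, (S i).LiesLeftOf p := by
  obtain ⟨q, ⟨hq1, hq2⟩, i, hi⟩ := exists_mem_toSet_of_isBounded_connectedComponentIn hbd
    (isPreconnected_Iic.prod isPreconnected_singleton) ⟨self_mem_Iic, rfl⟩
    fun h => not_bddBelow_Iic p.1 (h.fst_of_prod (singleton_nonempty _)).bddBelow
  rw [mem_singleton_iff] at hq2
  exact ⟨i, hq2 ▸ hi.2, not_le.1 fun h => hp (mem_iUnion.2 ⟨i, ⟨hi.1.1.trans hq1, h⟩, hq2 ▸ hi.2⟩)⟩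

theorem exists_liesRightOf (hp : p ∉ ⋃ i, (S i).toSet)
    (hbd : IsBounded (connectedComponentIn (⋃ i, (S i).toSet)ᶜ p)) : ∃ i, (S i).LiesRightOf p := by
  obtain ⟨q, ⟨hq1, hq2⟩, i, hi⟩ := exists_mem_toSet_of_isBounded_connectedComponentIn hbd
    (isPreconnected_Ici.prod isPreconnected_singleton) ⟨self_mem_Ici, rfl⟩
    fun h => not_bddAbove_Ici p.1 (h.fst_of_prod (singleton_nonempty _)).bddAbove
  rw [mem_singleton_iff] at hq2
  exact ⟨i, hq2 ▸ hi.2, not_le.1 fun h => hp (mem_iUnion.2 ⟨i, ⟨h, hq1.trans hi.1.2⟩, hq2 ▸ hi.2⟩)⟩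

end Blocking

theorem connectedComponentIn_compl_union_four_eq {U D L R : AxSquare} {p : ℝ × ℝ}
    (hU : U.LiesAbove p) (hD : D.LiesBelow p) (hL : L.LiesLeftOf p) (hR : R.LiesRightOf p)
    (hUL : (U.toSet ∩ L.toSet).Nonempty) (hUR : (U.toSet ∩ R.toSet).Nonempty)
    (hDL : (D.toSet ∩ L.toSet).Nonempty) (hDR : (D.toSet ∩ R.toSet).Nonempty) :
    connectedComponentIn (U.toSet ∪ D.toSet ∪ L.toSet ∪ R.toSet)ᶜ p =
      Ioo L.right R.left ×ˢ Ioo D.top U.bottom := by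
  have hLR : L.right < R.left := hL.2.trans hR.2
  have hDU : D.top < U.bottom := hD.2.trans hU.2
  refine connectedComponentIn_eq_of_isOpen_of_disjoint_frontier (isOpen_Ioo.prod isOpen_Ioo)
    ((convex_Ioo _ _).prod (convex_Ioo _ _)).isPreconnected ?_ ?_ ⟨⟨hL.2, hR.2⟩, hD.2, hU.2⟩
  · rintro q ⟨⟨hqL, hqR⟩, hqD, hqU⟩ hq
    rcases hq with ((hq | hq) | hq) | hq
    exacts [hqU.not_ge hq.2.1, hqD.not_ge hq.2.2, hqL.not_ge hq.1.2, hqR.not_ge hq.1.1]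
  rw [disjoint_compl_right_iff_subset, frontier_prod_eq, closure_Ioo hLR.ne, closure_Ioo hDU.ne,
    frontier_Ioo hLR, frontier_Ioo hDU]
  rintro q (⟨hq1, hq2 | hq2⟩ | ⟨hq1 | hq1, hq2⟩)
  · refine .inl <| .inl <| .inr ⟨Icc_subset_Icc ?_ ?_ hq1, hq2 ▸ right_mem_Icc.2 D.bottom_lt_top.le⟩
    exacts [left_le_right_of_inter_nonempty hDL,
      left_le_right_of_inter_nonempty (inter_comm D.toSet _ ▸ hDR)]
  · refine .inl <| .inl <| .inl ⟨Icc_subset_Icc ?_ ?_ hq1, hq2 ▸ left_mem_Icc.2 U.bottom_lt_top.le⟩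
    exacts [left_le_right_of_inter_nonempty hUL,
      left_le_right_of_inter_nonempty (inter_comm U.toSet _ ▸ hUR)]
  · refine .inl <| .inr ⟨hq1 ▸ right_mem_Icc.2 L.left_lt_right.le, Icc_subset_Icc ?_ ?_ hq2⟩
    exacts [bottom_le_top_of_inter_nonempty (inter_comm D.toSet _ ▸ hDL),
      bottom_le_top_of_inter_nonempty hUL]
  · refine .inr ⟨hq1 ▸ left_mem_Icc.2 R.left_lt_right.le, Icc_subset_Icc ?_ ?_ hq2⟩
    exacts [bottom_le_top_of_inter_nonempty (inter_comm D.toSet _ ▸ hDR),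
      bottom_le_top_of_inter_nonempty hUR]

theorem connectedComponentIn_compl_iUnion_eq {S : Fin 4 → AxSquare}
    (hS : ∀ i, ((S i).toSet ∩ (S (i + 1)).toSet).Nonempty) {p : ℝ × ℝ} {u d l r : Fin 4}
    (hu : (S u).LiesAbove p) (hd : (S d).LiesBelow p) (hl : (S l).LiesLeftOf p)
    (hr : (S r).LiesRightOf p) :
    connectedComponentIn (⋃ i, (S i).toSet)ᶜ p =
      Ioo (S l).right (S r).left ×ˢ Ioo (S d).top (S u).bottom := by
  have hud : u ≠ d := by rintro rfl; linarith [hu.2, hd.2, (S u).bottom_lt_top]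
  have hul : u ≠ l := by rintro rfl; linarith [hu.2, hl.1.1]
  have hur : u ≠ r := by rintro rfl; linarith [hu.2, hr.1.1]
  have hdl : d ≠ l := by rintro rfl; linarith [hd.2, hl.1.2]
  have hdr : d ≠ r := by rintro rfl; linarith [hd.2, hr.1.2]
  have hlr : l ≠ r := by rintro rfl; linarith [hl.2, hr.2, (S l).left_lt_right]
  have hdisj : ¬((S u).toSet ∩ (S d).toSet).Nonempty := fun h =>
    (hd.2.trans hu.2).not_ge (bottom_le_top_of_inter_nonempty h)
  have hdisj' : ¬((S d).toSet ∩ (S u).toSet).Nonempty := inter_comm (S u).toSet _ ▸ hdisj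
  rw [iUnion_eq_union_four _ hud hul hur hdl hdr hlr]
  exact connectedComponentIn_compl_union_four_eq hu hd hl hr
    (inter_nonempty_of_cycle_four hS hdisj hul.symm hdl.symm)
    (inter_nonempty_of_cycle_four hS hdisj hur.symm hdr.symm)
    (inter_nonempty_of_cycle_four hS hdisj' hdl.symm hul.symm)
    (inter_nonempty_of_cycle_four hS hdisj' hdr.symm hur.symm)

end AxSquare

theorem bounded_component_of_four_squares_is_rectangle_general (S : Fin 4 → AxSquare)
    (hadj : ∀ i : Fin 4, ((S i).toSet ∩ (S (i + 1)).toSet).Infinite) :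
    ∀ p ∈ ((S 0).toSet ∪ (S 1).toSet ∪ (S 2).toSet ∪ (S 3).toSet)ᶜ,
      Bornology.IsBounded
        (connectedComponentIn ((S 0).toSet ∪ (S 1).toSet ∪ (S 2).toSet ∪ (S 3).toSet)ᶜ p) →
      ∃ a b c d : ℝ, a < b ∧ c < d ∧
        connectedComponentIn ((S 0).toSet ∪ (S 1).toSet ∪ (S 2).toSet ∪ (S 3).toSet)ᶜ p =
          Set.Ioo a b ×ˢ Set.Ioo c d := by
  have hK : (S 0).toSet ∪ (S 1).toSet ∪ (S 2).toSet ∪ (S 3).toSet = ⋃ i, (S i).toSet :=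
    (iUnion_eq_union_four (fun i => (S i).toSet) (by decide) (by decide) (by decide) (by decide)
      (by decide) (by decide)).symm
  rw [hK]
  intro p hp hbd
  obtain ⟨u, hu⟩ := AxSquare.exists_liesAbove hp hbd
  obtain ⟨d, hd⟩ := AxSquare.exists_liesBelow hp hbd
  obtain ⟨l, hl⟩ := AxSquare.exists_liesLeftOf hp hbd
  obtain ⟨r, hr⟩ := AxSquare.exists_liesRightOf hp hbd
  exact ⟨_, _, _, _, hl.2.trans hr.2, hd.2.trans hu.2,
    AxSquare.connectedComponentIn_compl_iUnion_eq (fun i => (hadj i).nonempty) hu hd hl hr⟩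

/-- if four axis-aligned squares have pairwise disjoint interiors,
consecutive ones (cyclically) intersect in infinite sets, and opposite ones are
disjoint, then every bounded connected component of the complement of their union is
the interior of an axis-aligned rectangle (an open axis-aligned rectangle). -/
theorem bounded_component_of_four_squares_is_rectangle (S : Fin 4 → AxSquare)
    (hdisj : ∀ i j : Fin 4, i ≠ j →
      interior (S i).toSet ∩ interior (S j).toSet = ∅)
    (hadj : ∀ i : Fin 4, ((S i).toSet ∩ (S (i + 1)).toSet).Infinite)
    (h02 : (S 0).toSet ∩ (S 2).toSet = ∅)
    (h13 : (S 1).toSet ∩ (S 3).toSet = ∅) :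
    ∀ p ∈ ((S 0).toSet ∪ (S 1).toSet ∪ (S 2).toSet ∪ (S 3).toSet)ᶜ,
      Bornology.IsBounded
        (connectedComponentIn ((S 0).toSet ∪ (S 1).toSet ∪ (S 2).toSet ∪ (S 3).toSet)ᶜ p) →
      ∃ a b c d : ℝ, a < b ∧ c < d ∧
        connectedComponentIn ((S 0).toSet ∪ (S 1).toSet ∪ (S 2).toSet ∪ (S 3).toSet)ᶜ p =
          Set.Ioo a b ×ˢ Set.Ioo c d :=
  bounded_component_of_four_squares_is_rectangle_general S hadj
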